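/- arXiv:math/9808061 — 4 statements merged into one kernel-verified Lean document; each statement's English description precedes it below -/
import Mathlib

section
/- Let A ⊆ {1,...,N} be a B₂ set with |A| = k and m a positive integer. Let a(x) = |{a ∈ A : a ≡ x mod m}|. Then ∑_{x ∈ ZMod m} a(x)² ≤ k + 2·N/m. -/
/-!
Counting pairs by residue, `∑ₓ a(x)²` is the number of ordered pairs `(u, v) ∈ A × A` with
`u ≡ v [MOD m]`. The `k` diagonal pairs contribute `k`. For an off-diagonal pair, `(u - v) / m`
is a nonzero integer of absolute value at most `N / m`, and since a B₂ set has distinct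
differences, this map is injective, so there are at most `2 ⌊N / m⌋` off-diagonal pairs.
-/

open Finset

def IsB2 (A : Finset ℕ) : Prop :=
  ∀ a ∈ A, ∀ b ∈ A, ∀ c ∈ A, ∀ d ∈ A,
    b ≤ a → d ≤ c → a + b = c + d → a = c ∧ b = d

theorem sum_sq_card_filter_eq_card_filter_product {α β : Type*} [DecidableEq β] [Fintype β]
    (s : Finset α) (f : α → β) :
    ∑ y, #{x ∈ s | f x = y} ^ 2 = #{p ∈ s ×ˢ s | f p.1 = f p.2} := by
  rw [card_eq_sum_card_fiberwise (f := fun p => f p.1) (t := univ) (by simp)]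
  refine sum_congr rfl fun y _ => ?_
  rw [sq, ← card_product, filter_filter, ← filter_product]
  congr 1
  ext
  simp only [mem_filter, mem_product]
  grind

theorem card_filter_product_eq_card_add_card_filter_offDiag {α β : Type*} [DecidableEq α]
    [DecidableEq β] (s : Finset α) (f : α → β) :
    #{p ∈ s ×ˢ s | f p.1 = f p.2} = #s + #{p ∈ s.offDiag | f p.1 = f p.2} := by
  rw [← diag_union_offDiag, filter_union,
    card_union_of_disjoint (disjoint_filter_filter (disjoint_diag_offDiag s)),
    filter_true_of_mem fun p hp => congrArg f (mem_diag.1 hp).2, diag_card]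

theorem IsB2.eq_or_eq_of_add_eq_add {A : Finset ℕ} (hA : IsB2 A) {a b c d : ℕ} (ha : a ∈ A)
    (hb : b ∈ A) (hc : c ∈ A) (hd : d ∈ A) (h : a + b = c + d) :
    a = c ∧ b = d ∨ a = d ∧ b = c := by
  rcases le_total b a with hab | hab <;> rcases le_total d c with hcd | hcd
  · exact .inl (hA a ha b hb c hc d hd hab hcd h)
  · exact .inr (hA a ha b hb d hd c hc hab hcd (by omega))
  · exact .inr (hA b hb a ha c hc d hd hab hcd (by omega)).symm
  · exact .inl (hA b hb a ha d hd c hc hab hcd (by omega)).symm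

theorem IsB2.injOn_sub {A : Finset ℕ} (hA : IsB2 A) :
    Set.InjOn (fun p : ℕ × ℕ => (p.1 : ℤ) - p.2) A.offDiag := by
  rintro ⟨u, v⟩ huv ⟨u', v'⟩ huv' h
  simp only [coe_offDiag, Set.mem_offDiag] at huv huv' h
  rcases hA.eq_or_eq_of_add_eq_add huv.1 huv'.2.1 huv'.1 huv.2.1 (by omega) with h' | h'
  · simp [h'.1, h'.2]
  · omega

theorem IsB2.card_filter_offDiag_natCast_eq_le {A : Finset ℕ} (hB2 : IsB2 A) {N : ℕ}
    (hA : A ⊆ Icc 1 N) (m : ℕ) [NeZero m] :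
    #{p ∈ A.offDiag | (p.1 : ZMod m) = p.2} ≤ 2 * (N / m) := by
  have hm : (0 : ℤ) < m := by exact_mod_cast Nat.pos_of_neZero m
  set q : ℤ := (N : ℤ) / m
  have hdvd (p : ℕ × ℕ) (hp : (p.1 : ZMod m) = p.2) : (m : ℤ) ∣ p.1 - p.2 := by
    rw [← ZMod.intCast_eq_intCast_iff_dvd_sub]; simpa using hp.symm
  calc #{p ∈ A.offDiag | (p.1 : ZMod m) = p.2}
      ≤ #((Icc (-q) q).erase 0) := by
        refine card_le_card_of_injOn (fun p => ((p.1 : ℤ) - p.2) / m) ?_ ?_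
        · intro p hp
          rw [mem_coe, mem_filter] at hp
          obtain ⟨r, hr⟩ := hdvd p hp.2
          obtain ⟨hu, hv, hne⟩ := mem_offDiag.1 hp.1
          have hu := mem_Icc.1 (hA hu)
          have hv := mem_Icc.1 (hA hv)
          simp only [coe_erase, coe_Icc, Set.mem_sdiff, Set.mem_Icc, Set.mem_singleton_iff, hr,
            Int.mul_ediv_cancel_left _ hm.ne']
          refine ⟨⟨neg_le.1 (Int.le_ediv_of_mul_le hm ?_), Int.le_ediv_of_mul_le hm ?_⟩, ?_⟩
          · linarith
          · linarith
          · rintro rfl; omega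
        · intro p hp p' hp' h
          rw [mem_coe, mem_filter] at hp hp'
          exact hB2.injOn_sub hp.1 hp'.1 ((Int.ediv_left_inj (hdvd p hp.2) (hdvd p' hp'.2)).1 h)
    _ = 2 * (N / m) := by
        rw [card_erase_of_mem (by simp; positivity), Int.card_Icc]
        omega

theorem stmt_8 (N m : ℕ) [NeZero m] (A : Finset ℕ)
    (hA : A ⊆ Finset.Icc 1 N)
    (hB2 : ∀ a ∈ A, ∀ b ∈ A, ∀ c ∈ A, ∀ d ∈ A,
      b ≤ a → d ≤ c → a + b = c + d → a = c ∧ b = d)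
    (k : ℕ) (hk : A.card = k)
    (a : ZMod m → ℕ)
    (ha : ∀ x : ZMod m, a x = (A.filter (fun n => ((n : ℕ) : ZMod m) = x)).card) :
    (∑ x : ZMod m, (a x : ℝ) ^ 2) ≤ k + 2 * N / m := by
  have hcount : ∑ x, a x ^ 2 ≤ k + 2 * (N / m) := by
    simp only [ha, sum_sq_card_filter_eq_card_filter_product,
      card_filter_product_eq_card_add_card_filter_offDiag, hk]
    exact Nat.add_le_add_left (IsB2.card_filter_offDiag_natCast_eq_le hB2 hA m) k
  calc (∑ x, (a x : ℝ) ^ 2) = ((∑ x, a x ^ 2 : ℕ) : ℝ) := by push_cast; rfl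
    _ ≤ k + 2 * ((N / m : ℕ) : ℝ) := by exact_mod_cast hcount
    _ ≤ k + 2 * N / m := by
      rw [mul_div_assoc]
      gcongr
      exact Nat.cast_div_le
end

section
/- Let A ⊆ {1,...,N} be a B₂ set with |A| = k, m a positive integer, and a(x) = |{a ∈ A : a ≡ x mod m}|. Then ∑_{x ∈ ZMod m} (a(x) - k/m)² ≤ k + 2N/m - k²/m. -/
/-!
Write `a(x)² = a(x) + 2·C(a(x), 2)`. Summing over the residue classes, `∑ a(x) = k` and
`∑ C(a(x), 2)` counts the pairs `u < v` in `A` with `u ≡ v (mod m)`. In a B₂ set the difference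
`v - u` determines the pair, and it is a multiple of `m` in `(0, N]`, so there are at most `N / m`
such pairs. Hence `∑ a(x)² ≤ k + 2N/m`, and the variance identity finishes the proof.
-/

open Finset

theorem Finset.sum_sub_average_sq {ι K : Type*} [Field K] (s : Finset ι) (f : ι → K) :
    ∑ i ∈ s, (f i - (∑ j ∈ s, f j) / #s) ^ 2 = ∑ i ∈ s, f i ^ 2 - (∑ i ∈ s, f i) ^ 2 / #s := by
  by_cases hs : (#s : K) = 0
  · simp [hs]
  · simp only [sub_sq, sum_add_distrib, sum_sub_distrib, ← sum_mul, ← mul_sum, sum_const,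
      nsmul_eq_mul]
    field_simp
    ring

def IsB2Set (A : Finset ℕ) : Prop :=
  ∀ a ∈ A, ∀ b ∈ A, ∀ c ∈ A, ∀ d ∈ A, b ≤ a → d ≤ c → a + b = c + d → a = c ∧ b = d

namespace IsB2Set

variable {A : Finset ℕ}

theorem eq_or_eq_of_add_eq_add (hA : IsB2Set A) {a b c d : ℕ} (ha : a ∈ A) (hb : b ∈ A)
    (hc : c ∈ A) (hd : d ∈ A) (h : a + b = c + d) : a = c ∧ b = d ∨ a = d ∧ b = c := by
  have := hA (max a b) (max_rec' (· ∈ A) ha hb) (min a b) (min_rec' (· ∈ A) ha hb)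
    (max c d) (max_rec' (· ∈ A) hc hd) (min c d) (min_rec' (· ∈ A) hc hd)
    min_le_max min_le_max (by omega)
  omega

theorem injOn_sub (hA : IsB2Set A) :
    Set.InjOn (fun p : ℕ × ℕ => p.2 - p.1) {p | p.1 ∈ A ∧ p.2 ∈ A ∧ p.1 < p.2} := by
  rintro ⟨u, v⟩ ⟨hu, hv, huv : u < v⟩ ⟨u', v'⟩ ⟨hu', hv', huv' : u' < v'⟩
    (h : v - u = v' - u')
  rcases hA.eq_or_eq_of_add_eq_add hv hu' hv' hu (by omega) with ⟨hvv', huu'⟩ | ⟨hvu, -⟩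
  · exact Prod.ext huu'.symm hvv'
  · omega

theorem sum_choose_two_card_residue_le (hA : IsB2Set A) {N : ℕ} (hAN : A ⊆ Icc 1 N)
    (m : ℕ) [NeZero m] :
    ∑ x : ZMod m, (#{n ∈ A | ((n : ℕ) : ZMod m) = x}).choose 2 ≤ N / m := by
  simp only [← card_product_filter_lt]
  rw [← card_sigma, ← Nat.Ioc_filter_dvd_card_eq_div]
  refine card_le_card_of_injOn (fun p => p.2.2 - p.2.1) ?_ ?_
  · rintro ⟨x, u, v⟩ hp
    simp only [coe_sigma, Set.mem_sigma_iff, mem_coe, mem_univ, mem_filter, mem_product,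
      true_and] at hp
    obtain ⟨⟨⟨hu, rfl⟩, hv, hvu⟩, huv⟩ := hp
    have hv' := mem_Icc.mp (hAN hv)
    have hdvd : m ∣ v - u :=
      (Nat.modEq_iff_dvd' huv.le).mp ((ZMod.natCast_eq_natCast_iff _ _ _).mp hvu.symm)
    simp only [mem_coe, mem_filter, mem_Ioc]
    exact ⟨⟨by omega, by omega⟩, hdvd⟩
  · rintro ⟨x, u, v⟩ hp ⟨x', u', v'⟩ hp' h
    simp only [coe_sigma, Set.mem_sigma_iff, mem_coe, mem_univ, mem_filter, mem_product,
      true_and] at hp hp'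
    obtain ⟨⟨⟨hu, rfl⟩, hv, -⟩, huv⟩ := hp
    obtain ⟨⟨⟨hu', rfl⟩, hv', -⟩, huv'⟩ := hp'
    obtain ⟨rfl, rfl⟩ := Prod.ext_iff.mp (hA.injOn_sub ⟨hu, hv, huv⟩ ⟨hu', hv', huv'⟩ h)
    rfl

end IsB2Set

theorem stmt_9 (N m : ℕ) [NeZero m] (A : Finset ℕ)
    (hA : A ⊆ Finset.Icc 1 N)
    (hB2 : ∀ a ∈ A, ∀ b ∈ A, ∀ c ∈ A, ∀ d ∈ A,
      b ≤ a → d ≤ c → a + b = c + d → a = c ∧ b = d)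
    (k : ℕ) (hk : A.card = k)
    (a : ZMod m → ℕ)
    (ha : ∀ x : ZMod m, a x = (A.filter (fun n => ((n : ℕ) : ZMod m) = x)).card) :
    (∑ x : ZMod m, ((a x : ℝ) - k / m) ^ 2) ≤ k + 2 * N / m - (k : ℝ) ^ 2 / m := by
  have hsum : ∑ x, (a x : ℝ) = k := by
    simp only [ha]
    rw [← hk, card_eq_sum_card_fiberwise (f := fun n : ℕ => (n : ZMod m)) (t := univ)
      fun _ _ => mem_univ _, Nat.cast_sum]
  have hpairs : ∑ x, (a x).choose 2 ≤ N / m := by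
    simpa only [ha] using IsB2Set.sum_choose_two_card_residue_le hB2 hA m
  have hsq : ∑ x, (a x : ℝ) ^ 2 ≤ k + 2 * N / m :=
    calc ∑ x, (a x : ℝ) ^ 2 = ∑ x, ((a x : ℝ) + 2 * ((a x).choose 2 : ℝ)) := by
          simp only [Nat.cast_choose_two]; ring_nf
      _ = k + 2 * ((∑ x, (a x).choose 2 : ℕ) : ℝ) := by
          rw [sum_add_distrib, ← mul_sum, hsum, Nat.cast_sum]
      _ ≤ k + 2 * ((N / m : ℕ) : ℝ) := by gcongr
      _ ≤ k + 2 * N / m := by rw [mul_div_assoc]; gcongr; exact Nat.cast_div_le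
  have hvar := sum_sub_average_sq univ fun x => (a x : ℝ)
  rw [hsum, card_univ, ZMod.card] at hvar
  linarith
end

section
/- Let A ⊆ {1,...,N} be a B₂ set with |A| ≥ N^{1/2} - ℓ where 0 ≤ ℓ ≤ N^{1/2}, and let m ≥ 1. Writing k = |A| and a(x) = |{a ∈ A : a ≡ x mod m}|, one has ∑_{x ∈ ZMod m} (a(x) - k/m)² ≤ 2N/m - k²/m + k. -/
theorem stmt_10 (N m : ℕ) [NeZero m] (A : Finset ℕ)
    (hA : A ⊆ Finset.Icc 1 N)
    (hB2 : ∀ a ∈ A, ∀ b ∈ A, ∀ c ∈ A, ∀ d ∈ A,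
      b ≤ a → d ≤ c → a + b = c + d → a = c ∧ b = d)
    (ℓ : ℝ) (hℓ0 : 0 ≤ ℓ) (hℓN : ℓ ≤ (N : ℝ) ^ ((1 : ℝ) / 2))
    (k : ℕ) (hk : A.card = k) (hklb : (k : ℝ) ≥ (N : ℝ) ^ ((1 : ℝ) / 2) - ℓ)
    (a : ZMod m → ℕ)
    (ha : ∀ x : ZMod m, a x = (A.filter (fun n => ((n : ℕ) : ZMod m) = x)).card) :
    (∑ x : ZMod m, ((a x : ℝ) - k / m) ^ 2) ≤ 2 * N / m + k - (k : ℝ) ^ 2 / m := by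
  classical
  subst hk
  have hm : 0 < m := Nat.pos_of_ne_zero (NeZero.ne m)
  -- (1) sum of a x equals card A
  have hsum : ∑ x : ZMod m, a x = A.card := by
    simp only [ha]
    exact (Finset.card_eq_sum_card_fiberwise
      (f := fun n : ℕ => ((n : ℕ) : ZMod m)) (t := Finset.univ)
      (fun n _ => Finset.mem_univ _)).symm
  -- the set of congruent pairs
  set P := (A ×ˢ A).filter (fun p => ((p.1 : ℕ) : ZMod m) = ((p.2 : ℕ) : ZMod m)) with hPdef
  have hsq : ∑ x : ZMod m, (a x) ^ 2 = P.card := by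
    rw [Finset.card_eq_sum_card_fiberwise
      (f := fun p : ℕ × ℕ => ((p.1 : ℕ) : ZMod m)) (t := Finset.univ)
      (fun p _ => Finset.mem_univ _)]
    refine Finset.sum_congr rfl fun x _ => ?_
    rw [ha]
    have hfe : P.filter (fun p => ((p.1 : ℕ) : ZMod m) = x)
        = (A.filter (fun n => ((n : ℕ) : ZMod m) = x)) ×ˢ
          (A.filter (fun n => ((n : ℕ) : ZMod m) = x)) := by
      ext p
      simp only [hPdef, Finset.mem_filter, Finset.mem_product]
      constructor
      · rintro ⟨⟨⟨h1, h2⟩, h3⟩, h4⟩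
        exact ⟨⟨h1, h4⟩, h2, h3 ▸ h4⟩
      · rintro ⟨⟨h1, h2⟩, h3, h4⟩
        exact ⟨⟨⟨h1, h3⟩, h2.trans h4.symm⟩, h2⟩
    rw [hfe, Finset.card_product, sq]
  -- key injectivity of differences (B₂ property)
  have key : ∀ u ∈ A, ∀ v ∈ A, ∀ u' ∈ A, ∀ v' ∈ A,
      v < u → v' < u' → u - v = u' - v' → u = u' ∧ v = v' := by
    intro u hu v hv u' hu' v' hv' h1 h2 hd
    have hsum' : u + v' = u' + v := by omega
    rcases le_or_gt v' u with h3 | h3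
    · rcases le_or_gt v u' with h4 | h4
      · have := hB2 u hu v' hv' u' hu' v hv h3 h4 hsum'
        exact ⟨this.1, this.2.symm⟩
      · have := hB2 u hu v' hv' v hv u' hu' h3 (by omega) (by omega)
        omega
    · have := hB2 v' hv' u hu u' hu' v hv (by omega) (by omega) (by omega)
      omega
  -- congruence gives divisibility
  have hdvd : ∀ p ∈ P, p.2 ≤ p.1 → m ∣ p.1 - p.2 := by
    intro p hp hle
    simp only [hPdef, Finset.mem_filter] at hp
    have : p.2 ≡ p.1 [MOD m] := ((ZMod.natCast_eq_natCast_iff _ _ _).mp hp.2).symm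
    exact (Nat.modEq_iff_dvd' hle).mp this
  set Pd := P.filter (fun p => p.1 = p.2) with hPd
  set Pgt := P.filter (fun p => p.2 < p.1) with hPgt
  set Plt := P.filter (fun p => p.1 < p.2) with hPlt
  have hPdcard : Pd.card = A.card := by
    have hPdim : Pd = A.image (fun n => (n, n)) := by
      ext p
      simp only [hPd, hPdef, Finset.mem_filter, Finset.mem_product, Finset.mem_image]
      constructor
      · rintro ⟨⟨⟨h1, h2⟩, h3⟩, h4⟩
        exact ⟨p.1, h1, Prod.ext rfl h4⟩
      · rintro ⟨n, hn, rfl⟩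
        exact ⟨⟨⟨hn, hn⟩, rfl⟩, rfl⟩
    rw [hPdim, Finset.card_image_of_injective _ (fun x y h => (Prod.mk.injEq _ _ _ _ ▸ h).1)]
  have hPltgt : Plt.card = Pgt.card := by
    apply Finset.card_bij (fun p _ => Prod.swap p)
    · intro p hp
      simp only [hPlt, hPgt, hPdef, Finset.mem_filter, Finset.mem_product, Prod.fst_swap,
        Prod.snd_swap] at hp ⊢
      exact ⟨⟨⟨hp.1.1.2, hp.1.1.1⟩, hp.1.2.symm⟩, hp.2⟩
    · intro p hp q hq h
      exact Prod.swap_injective h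
    · intro p hp
      refine ⟨Prod.swap p, ?_, (Prod.swap_swap p).symm⟩
      simp only [hPlt, hPgt, hPdef, Finset.mem_filter, Finset.mem_product, Prod.fst_swap,
        Prod.snd_swap] at hp ⊢
      exact ⟨⟨⟨hp.1.1.2, hp.1.1.1⟩, hp.1.2.symm⟩, hp.2⟩
  have hgtcard : Pgt.card ≤ (N - 1) / m := by
    have hle := Finset.card_le_card_of_injOn (s := Pgt) (f := fun p : ℕ × ℕ => (p.1 - p.2) / m)
      (t := Finset.Icc 1 ((N - 1) / m)) ?_ ?_
    · simpa using hle
    · intro p hp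
      simp only [Finset.mem_coe, hPgt, Finset.mem_filter] at hp
      have hdv := hdvd p hp.1 (le_of_lt hp.2)
      have hmem := hp.1
      simp only [hPdef, Finset.mem_filter, Finset.mem_product] at hmem
      have h1 := Finset.mem_Icc.mp (hA hmem.1.1)
      have h2 := Finset.mem_Icc.mp (hA hmem.1.2)
      have hmle : m ≤ p.1 - p.2 := Nat.le_of_dvd (by omega) hdv
      refine Finset.mem_Icc.mpr ⟨(Nat.one_le_div_iff hm).mpr hmle,
        Nat.div_le_div_right (by omega)⟩
    · intro p hp q hq h
      simp only [Finset.mem_coe, hPgt, Finset.mem_filter] at hp hq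
      obtain ⟨hpP, hplt⟩ := hp
      obtain ⟨hqP, hqlt⟩ := hq
      have hdp := hdvd p hpP (le_of_lt hplt)
      have hdq := hdvd q hqP (le_of_lt hqlt)
      have hde : p.1 - p.2 = q.1 - q.2 := by
        have hmm := congrArg (fun t => m * t) h
        simpa [Nat.mul_div_cancel' hdp, Nat.mul_div_cancel' hdq] using hmm
      simp only [hPdef, Finset.mem_filter, Finset.mem_product] at hpP hqP
      obtain ⟨heq1, heq2⟩ := key p.1 hpP.1.1 p.2 hpP.1.2 q.1 hqP.1.1 q.2 hqP.1.2 hplt hqlt hde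
      exact Prod.ext heq1 heq2
  -- partition of P
  have hPsplit : P.card = Pd.card + (Plt.card + Pgt.card) := by
    have h1 : P.card = Pd.card + (P.filter (fun p => ¬ p.1 = p.2)).card :=
      (Finset.card_filter_add_card_filter_not _).symm
    have h2 : P.filter (fun p => ¬ p.1 = p.2) = Plt ∪ Pgt := by
      ext p
      by_cases hpm : p ∈ P <;> simp only [hPlt, hPgt, Finset.mem_union, Finset.mem_filter, hpm,
        true_and, false_and, or_self, iff_false, not_false_eq_true, iff_true] <;> omega
    have h3 : Disjoint Plt Pgt := by
      rw [Finset.disjoint_left]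
      intro p hp hq
      simp only [hPlt, hPgt, Finset.mem_filter] at hp hq
      exact absurd hq.2 (lt_asymm hp.2)
    rw [h1, h2, Finset.card_union_of_disjoint h3]
  have hnat : ∑ x : ZMod m, (a x) ^ 2 ≤ A.card + 2 * ((N - 1) / m) := by
    omega
  -- pass to the reals
  have hMpos : (0 : ℝ) < (m : ℝ) := by exact_mod_cast hm
  have hs1 : ∑ x : ZMod m, (a x : ℝ) = (A.card : ℝ) := by exact_mod_cast hsum
  have hs2 : (∑ x : ZMod m, ((a x : ℝ)) ^ 2) ≤ (A.card : ℝ) + 2 * ((N : ℝ) / m) := by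
    have h1 : (∑ x : ZMod m, ((a x : ℝ)) ^ 2) = ((∑ x : ZMod m, (a x) ^ 2 : ℕ) : ℝ) := by
      push_cast; ring
    have h2 : (((N - 1) / m : ℕ) : ℝ) ≤ (N : ℝ) / m := by
      calc (((N - 1) / m : ℕ) : ℝ) ≤ ((N - 1 : ℕ) : ℝ) / (m : ℝ) := Nat.cast_div_le
        _ ≤ (N : ℝ) / m := by
            gcongr
            exact Nat.cast_le.mpr (Nat.sub_le N 1)
    have h4 : ((∑ x : ZMod m, (a x) ^ 2 : ℕ) : ℝ) ≤ (A.card : ℝ) + 2 * (((N - 1) / m : ℕ) : ℝ) := by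
      exact_mod_cast Nat.cast_le.mpr hnat
    rw [h1]
    linarith
  -- expand the square
  have hexp : ∀ x : ZMod m, ((a x : ℝ) - (A.card : ℝ) / m) ^ 2
      = (a x : ℝ) ^ 2 - 2 * ((A.card : ℝ) / m) * (a x : ℝ) + ((A.card : ℝ) / m) ^ 2 :=
    fun x => by ring
  rw [Finset.sum_congr rfl fun x _ => hexp x, Finset.sum_add_distrib,
    Finset.sum_sub_distrib, ← Finset.mul_sum, hs1, Finset.sum_const, Finset.card_univ,
    ZMod.card, nsmul_eq_mul]
  have e1 : (m : ℝ) * ((A.card : ℝ) / m) ^ 2 = (A.card : ℝ) ^ 2 / m := by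
    field_simp
  have e2 : 2 * ((A.card : ℝ) / m) * (A.card : ℝ) = 2 * ((A.card : ℝ) ^ 2 / m) := by
    ring
  have e3 : 2 * (N : ℝ) / m = 2 * ((N : ℝ) / m) := by ring
  rw [e1, e2, e3]
  linarith
end

section
/- If p(x) = M + ∑_{j=1}^{N} cos(λ_j x) ≥ 0 for all real x, with λ_j distinct positive integers, and m is a positive integer, then q(x) = M + ∑_{j : m ∣ λ_j} cos(λ_j x) ≥ 0 for all real x. -/
/-!
Averaging `p` over the `m` shifts `x + 2πt/m` kills every frequency `λ` with `m ∤ λ`, because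
`∑_{t<m} ζ^{λt} = 0` for a primitive `m`-th root of unity `ζ` with `ζ^λ ≠ 1`, and leaves the others
unchanged. So `m · q(x) = ∑_{t<m} p(x + 2πt/m) ≥ 0`.
-/

open Finset Real

theorem IsPrimitiveRoot.sum_range_pow_pow {R : Type*} [CommRing R] [IsDomain R] {ζ : R} {m : ℕ}
    (hζ : IsPrimitiveRoot ζ m) (l : ℕ) :
    ∑ t ∈ range m, (ζ ^ l) ^ t = if m ∣ l then (m : R) else 0 := by
  split_ifs with hdvd
  · simp [(hζ.pow_eq_one_iff_dvd l).mpr hdvd]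
  · have hne : 1 - ζ ^ l ≠ 0 := sub_ne_zero.mpr fun h => hdvd ((hζ.pow_eq_one_iff_dvd l).mp h.symm)
    apply mul_left_cancel₀ hne
    rw [mul_neg_geom_sum, ← pow_mul, mul_comm, pow_mul, hζ.pow_eq_one, one_pow, sub_self, mul_zero]

theorem sum_range_cos_mul_add_two_pi_div {m : ℕ} (hm : m ≠ 0) (l : ℕ) (x : ℝ) :
    ∑ t ∈ range m, cos (l * (x + 2 * π * t / m)) = if m ∣ l then m * cos (l * x) else 0 := by
  set ζ : ℂ := Complex.exp (2 * π * Complex.I / m)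
  have hcos : ∀ t : ℕ, cos (l * (x + 2 * π * t / m)) =
      (Complex.exp ((l * x : ℝ) * Complex.I) * (ζ ^ l) ^ t).re := by
    intro t
    rw [← Complex.exp_ofReal_mul_I_re, ← pow_mul, ← Complex.exp_nat_mul, ← Complex.exp_add]
    congr 2
    push_cast
    ring
  simp_rw [hcos, ← Complex.re_sum, ← mul_sum]
  rw [(Complex.isPrimitiveRoot_exp m hm).sum_range_pow_pow]
  split_ifs
  · rw [Complex.mul_re, Complex.exp_ofReal_mul_I_re, Complex.natCast_re, Complex.natCast_im,
      mul_zero, sub_zero, mul_comm]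
  · rw [mul_zero, Complex.zero_re]

theorem sum_range_const_add_sum_cos_mul_add_two_pi_div {ι : Type*} (s : Finset ι) (lam : ι → ℕ)
    (M : ℝ) {m : ℕ} (hm : m ≠ 0) (x : ℝ) :
    ∑ t ∈ range m, (M + ∑ j ∈ s, cos (lam j * (x + 2 * π * t / m))) =
      m * (M + ∑ j ∈ s with m ∣ lam j, cos (lam j * x)) := by
  rw [sum_add_distrib, sum_const, card_range, sum_comm]
  simp_rw [sum_range_cos_mul_add_two_pi_div hm, sum_ite, sum_const_zero, add_zero, ← mul_sum,
    nsmul_eq_mul, mul_add]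

theorem stmt_13_general (M : ℝ) (N : ℕ) (lam : Fin N → ℕ)
    (hp : ∀ x : ℝ, 0 ≤ M + ∑ j, Real.cos (lam j * x))
    (m : ℕ) (hm : 0 < m) :
    ∀ x : ℝ, 0 ≤ M + ∑ j ∈ Finset.univ.filter (fun j => m ∣ lam j),
      Real.cos (lam j * x) := by
  intro x
  have hsum := sum_range_const_add_sum_cos_mul_add_two_pi_div univ lam M hm.ne' x
  have hnonneg : 0 ≤ ∑ t ∈ range m, (M + ∑ j, cos (lam j * (x + 2 * π * t / m))) :=
    sum_nonneg fun t _ => hp _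
  rw [hsum] at hnonneg
  exact nonneg_of_mul_nonneg_right hnonneg (by exact_mod_cast hm)

theorem stmt_13 (M : ℝ) (N : ℕ) (lam : Fin N → ℕ)
    (hinj : Function.Injective lam) (hpos : ∀ j, 0 < lam j)
    (hp : ∀ x : ℝ, 0 ≤ M + ∑ j, Real.cos (lam j * x))
    (m : ℕ) (hm : 0 < m) :
    ∀ x : ℝ, 0 ≤ M + ∑ j ∈ Finset.univ.filter (fun j => m ∣ lam j),
      Real.cos (lam j * x) :=
  stmt_13_general M N lam hp m hm
end
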